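/- arXiv:1810.03772 — 5 statements merged into one kernel-verified Lean document; each statement's English description precedes it below -/
import Mathlib

section
/- The subgroup D' of ℤ₄⁴ generated by (0,1,2,3), (1,0,1,2), (0,0,0,2), and (0,0,2,0) has cardinality 64, and every element of D' is orthogonal to both (0,2,0,2) and (2,0,2,0). -/
/-! D' is exactly the orthogonal complement of (0,2,0,2) and (2,0,2,0), which has 64 elements
(counted by enumeration). The generators are orthogonal to both vectors; conversely, subtracting
v₁ • (0,1,2,3) + v₀ • (1,0,1,2) from an orthogonal v leaves some (0,0,x,y) with 2x = 2y = 0,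
a sum of the generators (0,0,2,0) and (0,0,0,2). -/

open Matrix

section

variable {ι R : Type*} [Fintype ι] [NonUnitalNonAssocRing R]

def dotOrthogonal (T : Set (ι → R)) : AddSubgroup (ι → R) where
  carrier := {v | ∀ w ∈ T, v ⬝ᵥ w = 0}
  add_mem' {u v} hu hv w hw := by rw [add_dotProduct, hu w hw, hv w hw, add_zero]
  zero_mem' w _ := zero_dotProduct w
  neg_mem' {v} hv w hw := by rw [neg_dotProduct, hv w hw, neg_zero]

theorem mem_dotOrthogonal_pair {a b v : ι → R} :
    v ∈ dotOrthogonal {a, b} ↔ v ⬝ᵥ a = 0 ∧ v ⬝ᵥ b = 0 := by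
  simp [dotOrthogonal]

end

local notation "𝒢" => ({![0,1,2,3], ![1,0,1,2], ![0,0,0,2], ![0,0,2,0]} : Set (Fin 4 → ZMod 4))

local notation "𝒪" => dotOrthogonal ({![0,2,0,2], ![2,0,2,0]} : Set (Fin 4 → ZMod 4))

theorem card_orthogonal : Nat.card 𝒪 = 64 := by
  rw [Nat.subtype_card (Finset.univ.filter fun v => v ⬝ᵥ ![0,2,0,2] = 0 ∧ v ⬝ᵥ ![2,0,2,0] = 0)
    (by simp [mem_dotOrthogonal_pair])]
  decide

theorem closure_le_orthogonal : AddSubgroup.closure 𝒢 ≤ 𝒪 := by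
  simp only [AddSubgroup.closure_le, Set.insert_subset_iff, Set.singleton_subset_iff,
    SetLike.mem_coe, mem_dotOrthogonal_pair]
  decide

theorem mem_closure_of_mem_orthogonal_of_apply_zero_eq_zero {r : Fin 4 → ZMod 4} (hr : r ∈ 𝒪)
    (h₀ : r 0 = 0) (h₁ : r 1 = 0) : r ∈ AddSubgroup.closure 𝒢 := by
  have key : ∀ r : Fin 4 → ZMod 4, r ⬝ᵥ ![0,2,0,2] = 0 → r ⬝ᵥ ![2,0,2,0] = 0 → r 0 = 0 →
      r 1 = 0 → r = 0 ∨ r = ![0,0,0,2] ∨ r = ![0,0,2,0] ∨ r = ![0,0,0,2] + ![0,0,2,0] := by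
    set_option maxRecDepth 10000 in decide
  have hg₃ : ![0,0,0,2] ∈ AddSubgroup.closure 𝒢 := AddSubgroup.subset_closure (by simp)
  have hg₄ : ![0,0,2,0] ∈ AddSubgroup.closure 𝒢 := AddSubgroup.subset_closure (by simp)
  obtain ⟨ha, hb⟩ := mem_dotOrthogonal_pair.1 hr
  rcases key r ha hb h₀ h₁ with rfl | rfl | rfl | rfl
  exacts [zero_mem _, hg₃, hg₄, add_mem hg₃ hg₄]

theorem orthogonal_le_closure : 𝒪 ≤ AddSubgroup.closure 𝒢 := by
  intro v hv
  have hg₁ : ![0,1,2,3] ∈ AddSubgroup.closure 𝒢 := AddSubgroup.subset_closure (by simp)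
  have hg₂ : ![1,0,1,2] ∈ AddSubgroup.closure 𝒢 := AddSubgroup.subset_closure (by simp)
  have hs : (v 1).val • ![0,1,2,3] + (v 0).val • ![1,0,1,2] ∈ AddSubgroup.closure 𝒢 :=
    add_mem (nsmul_mem hg₁ _) (nsmul_mem hg₂ _)
  have hr := sub_mem hv (closure_le_orthogonal hs)
  rw [← sub_add_cancel v _]
  refine add_mem (mem_closure_of_mem_orthogonal_of_apply_zero_eq_zero hr ?_ ?_) hs <;> simp

theorem stmt_2 :
    Nat.card (AddSubgroup.closure
      ({![0,1,2,3], ![1,0,1,2], ![0,0,0,2], ![0,0,2,0]} : Set (Fin 4 → ZMod 4))) = 64 ∧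
    ∀ v ∈ AddSubgroup.closure
      ({![0,1,2,3], ![1,0,1,2], ![0,0,0,2], ![0,0,2,0]} : Set (Fin 4 → ZMod 4)),
      (∑ i, v i * (![0,2,0,2] : Fin 4 → ZMod 4) i = 0) ∧
      (∑ i, v i * (![2,0,2,0] : Fin 4 → ZMod 4) i = 0) := by
  have hD : AddSubgroup.closure 𝒢 = 𝒪 := le_antisymm closure_le_orthogonal orthogonal_le_closure
  exact ⟨hD ▸ card_orthogonal, fun v hv => mem_dotOrthogonal_pair.1 (hD ▸ hv)⟩
end

section
/- Define the weight of (a,b,c,d) ∈ ℤ₄⁴ in D(2,0) as w(a,b)+w(c,d), where w(x,y)=0 iff (x,y)=(0,0), w(x,y)=1 iff (x,y) ∈ {(0,1),(0,3),(1,0),(3,0),(1,1),(3,3)}, and w(x,y)=2 otherwise. Then every nonzero element of the subgroup D'' of ℤ₄⁴ generated by (0,1,2,3) and (1,0,1,2) has D(2,0)-weight at least 3. -/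
/-- The Shrikhande weight on `ZMod 4 × ZMod 4`. -/
def shW (p : ZMod 4 × ZMod 4) : ℕ :=
  if p = 0 then 0
  else if p ∈ ({(0,1),(0,3),(1,0),(3,0),(1,1),(3,3)} : Finset (ZMod 4 × ZMod 4)) then 1
  else 2

/-- The weight of a vector of `ℤ₄⁴` viewed as a vertex of the Doob graph `D(2,0)`. -/
def doobW20 (v : Fin 4 → ZMod 4) : ℕ := shW (v 0, v 1) + shW (v 2, v 3)

theorem AddSubgroup.mem_closure_pair_iff_exists_zmod {n : ℕ} {M : Type*} [AddCommGroup M]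
    [Module (ZMod n) M] {x y z : M} :
    z ∈ AddSubgroup.closure {x, y} ↔ ∃ a b : ZMod n, a • x + b • y = z := by
  rw [AddSubgroup.mem_closure_pair]
  constructor
  · rintro ⟨k, l, rfl⟩
    exact ⟨k, l, by simp only [Int.cast_smul_eq_zsmul]⟩
  · rintro ⟨a, b, rfl⟩
    obtain ⟨k, rfl⟩ := ZMod.intCast_surjective a
    obtain ⟨l, rfl⟩ := ZMod.intCast_surjective b
    exact ⟨k, l, by simp only [Int.cast_smul_eq_zsmul]⟩

theorem three_le_doobW20_smul_add_smul (a b : ZMod 4)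
    (h : (a • ![0,1,2,3] + b • ![1,0,1,2] : Fin 4 → ZMod 4) ≠ 0) :
    3 ≤ doobW20 (a • ![0,1,2,3] + b • ![1,0,1,2]) := by
  revert a b
  decide

theorem stmt_8 :
    ∀ v ∈ AddSubgroup.closure ({![0,1,2,3], ![1,0,1,2]} : Set (Fin 4 → ZMod 4)),
      v ≠ 0 → 3 ≤ doobW20 v := by
  intro v hv
  obtain ⟨a, b, rfl⟩ := (AddSubgroup.mem_closure_pair_iff_exists_zmod (n := 4)).mp hv
  exact three_le_doobW20_smul_add_smul a b
end

section
/- Define the D(2,0)-weight of (a,b,c,d) ∈ ℤ₄⁴ as w(a,b)+w(c,d) with w the Shrikhande weight. Then every nonzero element of the subgroup D' of ℤ₄⁴ generated by (0,1,2,3), (1,0,1,2), (0,0,0,2), and (0,0,2,0) has D(2,0)-weight at least 2. -/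
/-!
Every generator of `D'` has its two halves congruent modulo `2`, hence so does every element.
For such a vector with one half zero, the other half lies in `2 ℤ₄²`, whose nonzero elements
all have Shrikhande weight `2`; if neither half is zero, each contributes at least `1`.
-/

@[simp]
lemma shW_zero : shW 0 = 0 := rfl

lemma shW_eq_zero_iff (p : ZMod 4 × ZMod 4) : shW p = 0 ↔ p = 0 := by
  revert p; decide

lemma one_le_shW {p : ZMod 4 × ZMod 4} (hp : p ≠ 0) : 1 ≤ shW p :=
  Nat.one_le_iff_ne_zero.2 fun h => hp ((shW_eq_zero_iff p).1 h)

lemma shW_eq_two_of_two_nsmul_eq_zero {p : ZMod 4 × ZMod 4} (h2 : 2 • p = 0) (hp : p ≠ 0) :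
    shW p = 2 := by
  revert p; decide

lemma two_le_shW_add_shW {p q : ZMod 4 × ZMod 4} (hpq : 2 • (p - q) = 0) (hne : (p, q) ≠ 0) :
    2 ≤ shW p + shW q := by
  by_cases hp : p = 0
  · subst hp
    have hq : q ≠ 0 := fun hq => hne (by simp [hq])
    simp [shW_eq_two_of_two_nsmul_eq_zero (by simpa using hpq) hq]
  by_cases hq : q = 0
  · subst hq
    simp [shW_eq_two_of_two_nsmul_eq_zero (by simpa using hpq) hp]
  exact add_le_add (one_le_shW hp) (one_le_shW hq)

def halvesCongrModTwo : AddSubgroup (Fin 4 → ZMod 4) where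
  carrier := {v | 2 • ((v 0, v 1) - (v 2, v 3)) = (0 : ZMod 4 × ZMod 4)}
  zero_mem' := by simp
  add_mem' := by
    intro a b ha hb
    simp only [Set.mem_ofPred_eq, Pi.add_apply] at *
    rw [← Prod.mk_add_mk, ← Prod.mk_add_mk, add_sub_add_comm, smul_add, ha, hb, add_zero]
  neg_mem' := by
    intro a ha
    simp only [Set.mem_ofPred_eq, Pi.neg_apply] at *
    rw [← Prod.neg_mk, ← Prod.neg_mk, ← neg_sub', smul_neg, ha, neg_zero]

lemma mem_halvesCongrModTwo {v : Fin 4 → ZMod 4} :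
    v ∈ halvesCongrModTwo ↔ 2 • ((v 0, v 1) - (v 2, v 3)) = (0 : ZMod 4 × ZMod 4) :=
  Iff.rfl

lemma two_le_doobW20_of_mem_halvesCongrModTwo {v : Fin 4 → ZMod 4} (hv : v ∈ halvesCongrModTwo)
    (hne : v ≠ 0) : 2 ≤ doobW20 v := by
  refine two_le_shW_add_shW hv fun h => hne ?_
  simp only [Prod.mk_eq_zero] at h
  ext i; fin_cases i <;> simp [h]

lemma closure_le_halvesCongrModTwo :
    AddSubgroup.closure
      ({![0,1,2,3], ![1,0,1,2], ![0,0,0,2], ![0,0,2,0]} : Set (Fin 4 → ZMod 4)) ≤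
      halvesCongrModTwo := by
  rw [AddSubgroup.closure_le]
  simp only [Set.insert_subset_iff, Set.singleton_subset_iff, SetLike.mem_coe,
    mem_halvesCongrModTwo]
  decide

theorem stmt_11 :
    ∀ v ∈ AddSubgroup.closure
      ({![0,1,2,3], ![1,0,1,2], ![0,0,0,2], ![0,0,2,0]} : Set (Fin 4 → ZMod 4)),
      v ≠ 0 → 2 ≤ doobW20 v :=
  fun _ hv => two_le_doobW20_of_mem_halvesCongrModTwo (closure_le_halvesCongrModTwo hv)
end

section
/- Let H ⊆ 𝔽₄^n, n=(4^k−1)/3, be the Hamming code defined as the kernel of the check matrix P whose columns are all vectors in 𝔽₄^k with first nonzero entry 1, listed in inverse lexicographic order. If c̄ ∈ H, ē ∈ E'' (the span of (1,1,1,1) and (0,1,ξ,ξ²)), and 0 ≤ j < (n−1)/4, then the word b̄ obtained from c̄ by adding ē to coordinates 4j+1,…,4j+4 is also in H. -/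
/-!
Adding `ē` to the block `4j+1, …, 4j+4` changes each syndrome `(P b̄)_i` by the dot product of
`ē` with row `i` of `P` restricted to that block. That restriction is a multiple of `(1,1,1,1)`
or equals `(ξ², ξ, 1, 0)`, and in characteristic `2` with `ξ² + ξ + 1 = 0` both of these are
orthogonal to the generators `(1,1,1,1)` and `(0,1,ξ,ξ²)` of `E''`.
-/

open Matrix

theorem sq_add_self_add_one_eq_zero_of_natCard_eq_four {F : Type*} [Field F] [Finite F]
    (hF : Nat.card F = 4) {ξ : F} (hξ0 : ξ ≠ 0) (hξ1 : ξ ≠ 1) : ξ ^ 2 + ξ + 1 = 0 := by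
  have := Fintype.ofFinite F
  have hpow : ξ ^ 4 = ξ := by
    rw [← hF, ← Fintype.card_eq_nat_card, FiniteField.pow_card]
  have hfactor : ξ * ((ξ - 1) * (ξ ^ 2 + ξ + 1)) = 0 := by linear_combination hpow
  simpa [hξ0, sub_eq_zero, hξ1] using hfactor

theorem sum_mul_add_block {R : Type*} [Semiring R] {n m : ℕ} (v c b : Fin n → R)
    (e : Fin m → R) (j : ℕ) (hjm : j + m ≤ n)
    (hb : ∀ t : Fin n, b t =
      if h : j ≤ (t : ℕ) ∧ (t : ℕ) < j + m then c t + e ⟨(t : ℕ) - j, by omega⟩ else c t) :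
    ∑ t, v t * b t = ∑ t, v t * c t + ∑ s : Fin m, v ⟨j + s, by omega⟩ * e s := by
  let d : Fin n → R := fun t =>
    if h : j ≤ (t : ℕ) ∧ (t : ℕ) < j + m then v t * e ⟨(t : ℕ) - j, by omega⟩ else 0
  have hbd : ∀ t, v t * b t = v t * c t + d t := by
    intro t
    rw [hb t]
    simp only [d]
    split_ifs <;> simp [mul_add]
  have hd : ∑ s : Fin m, v ⟨j + s, by omega⟩ * e s = ∑ t, d t := by
    refine Fintype.sum_of_injective (fun s : Fin m => (⟨j + s, by omega⟩ : Fin n))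
      (fun s s' h => Fin.ext (by simpa using h)) _ d (fun t ht => dif_neg ?_) (fun s => ?_)
    · rintro ⟨hjt, htm⟩
      exact ht ⟨⟨(t : ℕ) - j, by omega⟩, Fin.ext (by simp only; omega)⟩
    · simp [d]
  rw [Finset.sum_congr rfl fun t _ => hbd t, Finset.sum_add_distrib, hd]

section Orthogonality

variable {F : Type*} [Field F] [CharP F 2] {ξ : F} {e : Fin 4 → F}

theorem const_dotProduct_eq_zero_of_mem_span (hξ : ξ ^ 2 + ξ + 1 = 0)
    (he : e ∈ Submodule.span F ({![1, 1, 1, 1], ![0, 1, ξ, ξ ^ 2]} : Set (Fin 4 → F)))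
    (a : F) : (fun _ => a) ⬝ᵥ e = 0 := by
  obtain ⟨α, β, rfl⟩ := Submodule.mem_span_pair.mp he
  have h2 : (2 : F) = 0 := CharTwo.two_eq_zero
  simp only [dotProduct, Fin.sum_univ_four, Pi.add_apply, Pi.smul_apply, smul_eq_mul, cons_val]
  linear_combination a * β * hξ + 2 * a * α * h2

theorem dotProduct_eq_zero_of_mem_span (hξ : ξ ^ 2 + ξ + 1 = 0)
    (he : e ∈ Submodule.span F ({![1, 1, 1, 1], ![0, 1, ξ, ξ ^ 2]} : Set (Fin 4 → F))) :
    ![ξ ^ 2, ξ, 1, 0] ⬝ᵥ e = 0 := by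
  obtain ⟨α, β, rfl⟩ := Submodule.mem_span_pair.mp he
  have h2 : (2 : F) = 0 := CharTwo.two_eq_zero
  simp only [dotProduct, Fin.sum_univ_four, Pi.add_apply, Pi.smul_apply, smul_eq_mul, cons_val]
  linear_combination α * hξ + β * ξ * h2

end Orthogonality

theorem stmt_18 (k n : ℕ) (hk : 0 < k)
    (ξ : GaloisField 2 2) (hξ0 : ξ ≠ 0) (hξ1 : ξ ≠ 1)
    (P : Matrix (Fin k) (Fin n) (GaloisField 2 2))
    (hlast : ∀ j : ℕ, ∀ hjn : 4 * j + 4 ≤ n - 1, ∀ t : Fin 4,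
      P ⟨k - 1, by omega⟩ ⟨4 * j + t, by have := t.isLt; omega⟩ =
        ![ξ^2, ξ, 1, 0] t)
    (hrows : ∀ j : ℕ, ∀ hjn : 4 * j + 4 ≤ n - 1, ∀ i : Fin k, (i : ℕ) < k - 1 →
      ∃ a : GaloisField 2 2, ∀ t : Fin 4,
        P i ⟨4 * j + t, by have := t.isLt; omega⟩ = a)
    (c : Fin n → GaloisField 2 2)
    (hc : ∀ i : Fin k, ∑ t, P i t * c t = 0)
    (e : Fin 4 → GaloisField 2 2)
    (he : e ∈ Submodule.span (GaloisField 2 2)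
      ({![1,1,1,1], ![0,1,ξ,ξ^2]} : Set (Fin 4 → GaloisField 2 2)))
    (j : ℕ) (hj : 4 * j + 4 ≤ n - 1)
    (b : Fin n → GaloisField 2 2)
    (hb : ∀ t : Fin n, b t =
      if h : 4 * j ≤ (t : ℕ) ∧ (t : ℕ) < 4 * j + 4 then
        c t + e ⟨(t : ℕ) - 4 * j, by omega⟩
      else c t) :
    ∀ i : Fin k, ∑ t, P i t * b t = 0 := by
  have hξ := sq_add_self_add_one_eq_zero_of_natCard_eq_four (GaloisField.card 2 2 two_ne_zero)
    hξ0 hξ1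
  intro i
  rw [sum_mul_add_block (P i) c b e (4 * j) (by omega) hb, hc i, zero_add]
  change (fun s : Fin 4 => P i ⟨4 * j + s, _⟩) ⬝ᵥ e = 0
  by_cases hi : (i : ℕ) < k - 1
  · obtain ⟨a, ha⟩ := hrows j hj i hi
    rw [funext ha]
    exact const_dotProduct_eq_zero_of_mem_span hξ he a
  · have hik : i = ⟨k - 1, by omega⟩ := Fin.ext (by have := i.isLt; simp only; omega)
    rw [hik, funext (hlast j hj)]
    exact dotProduct_eq_zero_of_mem_span hξ he
end

section
/- Let Γ be a 12-regular graph on 256 vertices and C'' a 1-error-correcting code of size 16 in Γ (distinct codewords at distance ≥ 3), contained in a code C' of size 64 with minimum distance ≥ 2, both being subgroups of an abelian group structure on V(Γ) making Γ a Cayley graph. Then each of the 12 cosets of C'' not lying in the coset of C' through a fixed x ∈ V(Γ) contains exactly one neighbor of x, and these account for all 12 neighbors of x. -/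
/-!
The neighbours of `x` are the `x - s` with `s ∈ S`. Since `s` and `0` are adjacent, minimum
distance `≥ 2` in `C'` forces `S ∩ C' = ∅`; since any two elements of `S` have the common
neighbour `0`, minimum distance `≥ 3` in `C''` forces distinct elements of `S` into distinct
cosets of `C''`. There are `256/16 - 64/16 = 12` cosets of `C''` outside `C'` and `|S| = 12`,
so `S` meets each of them exactly once; translating by `x` gives the claim.
-/

theorem SimpleGraph.dist_le_two_of_adj_of_adj {V : Type*} {G : SimpleGraph V} {u v w : V}
    (huv : G.Adj u v) (hvw : G.Adj v w) : G.dist u w ≤ 2 := by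
  simpa using G.dist_le (.cons huv (.cons hvw .nil))

namespace AddSubgroup

variable {A : Type*} [AddCommGroup A] {H K : AddSubgroup A}

theorem mk_mem_map_mk'_iff (hHK : H ≤ K) {a : A} :
    (a : A ⧸ H) ∈ K.map (QuotientAddGroup.mk' H) ↔ a ∈ K := by
  refine ⟨?_, fun ha => ⟨a, ha, rfl⟩⟩
  rintro ⟨b, hb, hba⟩
  have hab : a - b ∈ H := (QuotientAddGroup.eq_iff_sub_mem).1 hba.symm
  simpa using K.add_mem (hHK hab) hb

theorem card_map_mk'_mul_card [Finite A] (hHK : H ≤ K) :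
    Nat.card (K.map (QuotientAddGroup.mk' H)) * Nat.card H = Nat.card K := by
  have hmap := (K.map (QuotientAddGroup.mk' H)).card_mul_index
  rw [K.index_map_eq (QuotientAddGroup.mk'_surjective H) (by rwa [QuotientAddGroup.ker_mk'])]
    at hmap
  have hH := H.card_mul_index
  have hK := K.card_mul_index
  have hKi : K.index ≠ 0 := index_ne_zero_of_finite
  rw [index] at hH
  apply Nat.eq_of_mul_eq_mul_right (Nat.pos_of_ne_zero hKi)
  rw [hK, ← hH, ← hmap]
  ring

end AddSubgroup

namespace SimpleGraph

variable {A : Type*} [AddCommGroup A] {S : Finset A} {G : SimpleGraph A} {C : AddSubgroup A}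

theorem adj_zero_of_mem (hG : ∀ x y : A, G.Adj x y ↔ x - y ∈ S) {s : A} (hs : s ∈ S) :
    G.Adj s 0 :=
  (hG s 0).2 (by simpa using hs)

theorem notMem_of_mem_of_two_le_dist (hG : ∀ x y : A, G.Adj x y ↔ x - y ∈ S)
    (hd2 : ∀ a b : A, a - b ∈ C → a ≠ b → 2 ≤ G.dist a b) {s : A} (hs : s ∈ S) : s ∉ C := by
  intro hsC
  have hadj := adj_zero_of_mem hG hs
  have h2 := hd2 s 0 (by simpa using hsC) hadj.ne
  rw [dist_eq_one_iff_adj.2 hadj] at h2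
  omega

theorem eq_of_sub_mem_of_three_le_dist (hG : ∀ x y : A, G.Adj x y ↔ x - y ∈ S)
    (hd3 : ∀ a b : A, a - b ∈ C → a ≠ b → 3 ≤ G.dist a b) {s t : A} (hs : s ∈ S) (ht : t ∈ S)
    (hst : s - t ∈ C) : s = t := by
  by_contra hne
  have h3 := hd3 s t hst hne
  have h2 := dist_le_two_of_adj_of_adj (adj_zero_of_mem hG hs)
    (adj_zero_of_mem hG ht).symm
  omega

theorem bijOn_mk_compl_map_mk' [Finite A] (hG : ∀ x y : A, G.Adj x y ↔ x - y ∈ S)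
    {C'' C' : AddSubgroup A} (hle : C'' ≤ C')
    (hd3 : ∀ a b : A, a - b ∈ C'' → a ≠ b → 3 ≤ G.dist a b)
    (hd2 : ∀ a b : A, a - b ∈ C' → a ≠ b → 2 ≤ G.dist a b)
    (hcard : S.card * Nat.card C'' = Nat.card A - Nat.card C') :
    Set.BijOn (QuotientAddGroup.mk' C'') S (C'.map (QuotientAddGroup.mk' C''))ᶜ := by
  have hmaps : Set.MapsTo (QuotientAddGroup.mk' C'') S (C'.map (QuotientAddGroup.mk' C''))ᶜ :=
    fun _ hs => (AddSubgroup.mk_mem_map_mk'_iff hle).not.2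
      (notMem_of_mem_of_two_le_dist hG hd2 hs)
  have hinj : Set.InjOn (QuotientAddGroup.mk' C'') S := fun s hs t ht hst =>
    eq_of_sub_mem_of_three_le_dist hG hd3 hs ht (QuotientAddGroup.eq_iff_sub_mem.1 hst)
  refine ⟨hmaps, hinj, ?_⟩
  refine (Set.eq_of_subset_of_ncard_le hmaps.image_subset ?_).symm.subset
  have hQ := C''.card_mul_index
  have hK := AddSubgroup.card_map_mk'_mul_card hle
  have hC'' : 0 < Nat.card C'' := Nat.card_pos
  rw [AddSubgroup.index] at hQ
  rw [hinj.ncard_image, Set.ncard_coe_finset, Set.ncard_compl, ← Nat.card_coe_set_eq,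
    SetLike.coe_sort_coe]
  refine Nat.le_of_mul_le_mul_right ?_ hC''
  rw [hcard, Nat.sub_mul, ← hK, mul_comm, hQ]

end SimpleGraph

theorem stmt_19_general {A : Type*} [AddCommGroup A] [Fintype A]
    (hA : Fintype.card A = 256)
    (S : Finset A) (hScard : S.card = 12)
    (G : SimpleGraph A) (hG : ∀ x y : A, G.Adj x y ↔ x - y ∈ S)
    (C'' C' : AddSubgroup A) (hle : C'' ≤ C')
    (h16 : Nat.card C'' = 16) (h64 : Nat.card C' = 64)
    (hd3 : ∀ a b : A, a - b ∈ C'' → a ≠ b → 3 ≤ G.dist a b)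
    (hd2 : ∀ a b : A, a - b ∈ C' → a ≠ b → 2 ≤ G.dist a b) :
    (∀ x z : A, x - z ∉ C' → ∃! y : A, y - z ∈ C'' ∧ G.Adj x y) ∧
    (∀ x y : A, G.Adj x y → x - y ∉ C') := by
  have hbij := SimpleGraph.bijOn_mk_compl_map_mk' hG hle hd3 hd2
    (by rw [hScard, h16, h64, Nat.card_eq_fintype_card, hA])
  refine ⟨fun x z hxz => ?_, fun x y hxy =>
    SimpleGraph.notMem_of_mem_of_two_le_dist hG hd2 ((hG x y).1 hxy)⟩
  obtain ⟨s, hs, hsxz⟩ := hbij.surjOn ((AddSubgroup.mk_mem_map_mk'_iff hle).not.2 hxz)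
  have hsxz : s - (x - z) ∈ C'' := QuotientAddGroup.eq_iff_sub_mem.1 hsxz
  refine ⟨x - s, ⟨?_, (hG _ _).2 (by simpa using hs)⟩, ?_⟩
  · convert C''.neg_mem hsxz using 1
    abel
  rintro y ⟨hyz, hxy⟩
  have hys : x - y = s := hbij.injOn ((hG x y).1 hxy) hs <| QuotientAddGroup.eq_iff_sub_mem.2 <| by
    convert C''.sub_mem (C''.neg_mem hsxz) hyz using 1
    abel
  rw [← hys, sub_sub_cancel]

theorem stmt_19 {A : Type*} [AddCommGroup A] [Fintype A]
    (hA : Fintype.card A = 256)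
    (S : Finset A) (hScard : S.card = 12) (hS0 : (0 : A) ∉ S)
    (hSsymm : ∀ s ∈ S, -s ∈ S)
    (G : SimpleGraph A) (hG : ∀ x y : A, G.Adj x y ↔ x - y ∈ S)
    (C'' C' : AddSubgroup A) (hle : C'' ≤ C')
    (h16 : Nat.card C'' = 16) (h64 : Nat.card C' = 64)
    (hd3 : ∀ a b : A, a - b ∈ C'' → a ≠ b → 3 ≤ G.dist a b)
    (hd2 : ∀ a b : A, a - b ∈ C' → a ≠ b → 2 ≤ G.dist a b) :
    (∀ x z : A, x - z ∉ C' → ∃! y : A, y - z ∈ C'' ∧ G.Adj x y) ∧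
    (∀ x y : A, G.Adj x y → x - y ∉ C') :=
  stmt_19_general hA S hScard G hG C'' C' hle h16 h64 hd3 hd2
end
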